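/- arXiv:1608.04818 — 2 statements merged into one kernel-verified Lean document; each statement's English description precedes it below -/
import Mathlib

section
/- For any p, q ∈ δ_N there exists a supremum p ∨ q under majorization: a vector s ∈ δ_N with p ≺ s, q ≺ s, and s ≺ t for every t ∈ δ_N satisfying p ≺ t and q ≺ t. Hence (δ_N, ≺) is a lattice. -/
open Finset

/-- Partial sum of the first `l` components of `p`. -/
def PartSum {N : ℕ} (p : Fin N → ℝ) (l : ℕ) : ℝ := ∑ i : Fin N, if (i : ℕ) < l then p i else 0

/-- `p` is a probability vector sorted in decreasing order (an element of δ_N). -/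
def IsDecProb {N : ℕ} (p : Fin N → ℝ) : Prop :=
  (∀ i, 0 ≤ p i) ∧ (∀ i j : Fin N, i ≤ j → p j ≤ p i) ∧ ∑ i, p i = 1

/-- `p ≺ q` : every partial sum of `p` is at most the corresponding partial sum of `q`. -/
def Maj {N : ℕ} (p q : Fin N → ℝ) : Prop := ∀ l : ℕ, PartSum p l ≤ PartSum q l

/-- `s` is the supremum of `p` and `q` in the majorization lattice. -/
def IsSup {N : ℕ} (s p q : Fin N → ℝ) : Prop :=
  IsDecProb s ∧ Maj p s ∧ Maj q s ∧ ∀ t, IsDecProb t → Maj p t → Maj q t → Maj s t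

/-- `s` is the infimum of `p` and `q` in the majorization lattice. -/
def IsInf {N : ℕ} (s p q : Fin N → ℝ) : Prop :=
  IsDecProb s ∧ Maj s p ∧ Maj s q ∧ ∀ t, IsDecProb t → Maj t p → Maj t q → Maj t s

/-- Shannon entropy. -/
noncomputable def H {N : ℕ} (p : Fin N → ℝ) : ℝ := -∑ i, p i * Real.log (p i)

/-! The partial sums `l ↦ PartSum t l` of a vector `t ∈ δ_N` form a nondecreasing concave
sequence running from `0` to `1`, and conversely every such sequence is the partial-sum
sequence of a unique vector of `δ_N`. Both properties survive pointwise infima, so for any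
nonempty `U ⊆ δ_N` the pointwise infimum of the partial sums of the members of `U` is the
partial-sum sequence of a greatest lower bound of `U` for `≺`. The supremum of `p` and `q`
is the greatest lower bound of their common upper bounds, a set containing `(1, 0, …, 0)`. -/

section PartSum

variable {N : ℕ}

lemma partSum_zero (t : Fin N → ℝ) : PartSum t 0 = 0 := by simp [PartSum]

lemma partSum_succ (t : Fin N → ℝ) (l : ℕ) :
    PartSum t (l + 1) = PartSum t l + if h : l < N then t ⟨l, h⟩ else 0 := by
  have hsplit : ∀ i : Fin N, (if (i : ℕ) < l + 1 then t i else 0)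
      = (if (i : ℕ) < l then t i else 0) + if (i : ℕ) = l then t i else 0 := by
    intro i
    split_ifs <;> first | omega | simp
  simp only [PartSum, hsplit, Finset.sum_add_distrib, add_right_inj]
  split_ifs with hl
  · simp [← Fin.ext_iff (b := ⟨l, hl⟩)]
  · exact Finset.sum_eq_zero fun i _ => if_neg (by omega)

lemma partSum_of_le (t : Fin N → ℝ) {l : ℕ} (h : N ≤ l) : PartSum t l = ∑ i, t i :=
  Finset.sum_congr rfl fun i _ => if_pos (i.2.trans_le h)

lemma partSum_mono {t : Fin N → ℝ} (ht : ∀ i, 0 ≤ t i) : Monotone (PartSum t) :=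
  fun l l' h => Finset.sum_le_sum fun i _ => by
    split_ifs <;> first | omega | exact le_rfl | exact ht i

lemma partSum_nonneg {t : Fin N → ℝ} (ht : ∀ i, 0 ≤ t i) (l : ℕ) : 0 ≤ PartSum t l :=
  partSum_zero t ▸ partSum_mono ht l.zero_le

lemma partSum_le_sum {t : Fin N → ℝ} (ht : ∀ i, 0 ≤ t i) (l : ℕ) :
    PartSum t l ≤ ∑ i, t i :=
  partSum_of_le t (le_max_right l N) ▸ partSum_mono ht (le_max_left l N)

lemma partSum_add_partSum_le {t : Fin N → ℝ} (ht : ∀ i, 0 ≤ t i) (hanti : Antitone t)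
    (l : ℕ) : PartSum t (l + 2) + PartSum t l ≤ 2 * PartSum t (l + 1) := by
  have hstep :
      (if h : l + 1 < N then t ⟨l + 1, h⟩ else 0) ≤ if h : l < N then t ⟨l, h⟩ else 0 := by
    split_ifs
    · exact hanti (Fin.mk_le_mk.mpr l.le_succ)
    · omega
    · exact ht _
    · exact le_rfl
  rw [partSum_succ t (l + 1), partSum_succ t l]
  linarith

lemma partSum_single {i : Fin N} (c : ℝ) (l : ℕ) :
    PartSum (Pi.single i c) l = if (i : ℕ) < l then c else 0 := by
  rw [PartSum, Finset.sum_eq_single i (fun j _ hj => by simp [hj]) (by simp)]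
  simp

end PartSum

lemma maj_of_forall_le {N : ℕ} {p s : Fin N → ℝ} (hsum : ∑ i, p i = ∑ i, s i)
    (h : ∀ l ≤ N, PartSum p l ≤ PartSum s l) : Maj p s := by
  intro l
  rcases le_or_gt l N with hl | hl
  · exact h l hl
  · rw [partSum_of_le p hl.le, partSum_of_le s hl.le, hsum]

lemma isDecProb_single_zero (n : ℕ) : IsDecProb (Pi.single (0 : Fin (n + 1)) (1 : ℝ)) := by
  refine ⟨fun i => ?_, fun i j hij => ?_, by simp⟩
  · by_cases hi : i = 0 <;> simp [hi]
  · by_cases hj : j = 0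
    · simp [hj, Fin.le_zero_iff.mp (hj ▸ hij)]
    · by_cases hi : i = 0 <;> simp [hi, hj]

lemma maj_single_zero {n : ℕ} {t : Fin (n + 1) → ℝ} (ht : IsDecProb t) :
    Maj t (Pi.single 0 1) := by
  intro l
  rw [partSum_single]
  split_ifs with hl
  · exact ht.2.2 ▸ partSum_le_sum ht.1 l
  · obtain rfl : l = 0 := by simpa using hl
    exact (partSum_zero t).le

def ofPartSums (N : ℕ) (S : ℕ → ℝ) : Fin N → ℝ := fun i => S (i + 1) - S i

section OfPartSums

variable {N : ℕ} {S : ℕ → ℝ}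

lemma partSum_ofPartSums (hS0 : S 0 = 0) {l : ℕ} (hl : l ≤ N) :
    PartSum (ofPartSums N S) l = S l := by
  induction l with
  | zero => rw [partSum_zero, hS0]
  | succ m ih =>
    rw [partSum_succ, ih (by omega), dif_pos (by omega), ofPartSums]
    ring

lemma isDecProb_ofPartSums (hS0 : S 0 = 0) (hSN : S N = 1) (hmono : Monotone S)
    (hconc : ∀ l, S (l + 2) + S l ≤ 2 * S (l + 1)) : IsDecProb (ofPartSums N S) := by
  have hanti : Antitone fun k => S (k + 1) - S k :=
    antitone_nat_of_succ_le fun k => by linarith [hconc k]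
  refine ⟨fun i => sub_nonneg.2 (hmono i.1.le_succ), fun i j hij => hanti hij, ?_⟩
  rw [← partSum_of_le _ le_rfl, partSum_ofPartSums hS0 le_rfl, hSN]

end OfPartSums

noncomputable def infPartSum {N : ℕ} (U : Set (Fin N → ℝ)) (l : ℕ) : ℝ :=
  sInf ((PartSum · l) '' U)

section InfPartSum

variable {N : ℕ} {U : Set (Fin N → ℝ)}

lemma infPartSum_le (hU : ∀ t ∈ U, ∀ i, 0 ≤ t i) {t : Fin N → ℝ} (ht : t ∈ U)
    (l : ℕ) : infPartSum U l ≤ PartSum t l :=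
  csInf_le ⟨0, by rintro _ ⟨u, hu, rfl⟩; exact partSum_nonneg (hU u hu) l⟩ ⟨t, ht, rfl⟩

lemma le_infPartSum (hne : U.Nonempty) {c : ℝ} {l : ℕ} (h : ∀ t ∈ U, c ≤ PartSum t l) :
    c ≤ infPartSum U l :=
  le_csInf (hne.image _) (by rintro _ ⟨t, ht, rfl⟩; exact h t ht)

lemma infPartSum_zero (hne : U.Nonempty) (hU : ∀ t ∈ U, ∀ i, 0 ≤ t i) :
    infPartSum U 0 = 0 := by
  obtain ⟨t, ht⟩ := hne
  refine le_antisymm ?_ (le_infPartSum ⟨t, ht⟩ fun u _ => (partSum_zero u).ge)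
  exact partSum_zero t ▸ infPartSum_le hU ht 0

lemma infPartSum_self (hne : U.Nonempty) (hU : ∀ t ∈ U, IsDecProb t) :
    infPartSum U N = 1 := by
  have hsum : ∀ t ∈ U, PartSum t N = 1 := fun t ht =>
    (partSum_of_le t le_rfl).trans (hU t ht).2.2
  obtain ⟨t, ht⟩ := hne
  exact le_antisymm (hsum t ht ▸ infPartSum_le (fun u hu => (hU u hu).1) ht N)
    (le_infPartSum ⟨t, ht⟩ fun u hu => (hsum u hu).ge)

lemma monotone_infPartSum (hne : U.Nonempty) (hU : ∀ t ∈ U, ∀ i, 0 ≤ t i) :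
    Monotone (infPartSum U) := fun l _ h =>
  le_infPartSum hne fun t ht => (infPartSum_le hU ht l).trans (partSum_mono (hU t ht) h)

lemma infPartSum_add_le (hne : U.Nonempty) (hU : ∀ t ∈ U, IsDecProb t) (l : ℕ) :
    infPartSum U (l + 2) + infPartSum U l ≤ 2 * infPartSum U (l + 1) := by
  suffices (infPartSum U (l + 2) + infPartSum U l) / 2 ≤ infPartSum U (l + 1) by linarith
  refine le_infPartSum hne fun t ht => ?_
  have hnonneg : ∀ u ∈ U, ∀ i, 0 ≤ u i := fun u hu => (hU u hu).1
  have := partSum_add_partSum_le (hU t ht).1 (hU t ht).2.1 l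
  linarith [infPartSum_le hnonneg ht (l + 2), infPartSum_le hnonneg ht l]

end InfPartSum

lemma exists_maj_glb {N : ℕ} {U : Set (Fin N → ℝ)} (hne : U.Nonempty)
    (hU : ∀ t ∈ U, IsDecProb t) :
    ∃ s, IsDecProb s ∧ (∀ t ∈ U, Maj s t) ∧
      ∀ r, IsDecProb r → (∀ t ∈ U, Maj r t) → Maj r s := by
  have hnonneg : ∀ t ∈ U, ∀ i, 0 ≤ t i := fun t ht => (hU t ht).1
  have h0 := infPartSum_zero hne hnonneg
  have hs := isDecProb_ofPartSums h0 (infPartSum_self hne hU) (monotone_infPartSum hne hnonneg)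
    (infPartSum_add_le hne hU)
  have hpart (l : ℕ) (hl : l ≤ N) := partSum_ofPartSums h0 (S := infPartSum U) hl
  refine ⟨_, hs, fun t ht => maj_of_forall_le ?_ fun l hl => ?_, fun r hr h => ?_⟩
  · rw [hs.2.2, (hU t ht).2.2]
  · exact hpart l hl ▸ infPartSum_le hnonneg ht l
  · refine maj_of_forall_le (by rw [hr.2.2, hs.2.2]) fun l hl => ?_
    exact hpart l hl ▸ le_infPartSum hne fun t ht => h t ht l

/-- For any p, q ∈ δ_N there exists a supremum under majorization, hence (δ_N, ≺) is
a lattice. -/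
theorem exists_maj_sup {N : ℕ} (p q : Fin N → ℝ) (hp : IsDecProb p) (hq : IsDecProb q) :
    ∃ s : Fin N → ℝ, IsDecProb s ∧ Maj p s ∧ Maj q s ∧
      ∀ t : Fin N → ℝ, IsDecProb t → Maj p t → Maj q t → Maj s t := by
  obtain ⟨n, rfl⟩ : ∃ n, N = n + 1 :=
    Nat.exists_eq_succ_of_ne_zero fun h => by subst h; simp [IsDecProb] at hp
  let U := {t | IsDecProb t ∧ Maj p t ∧ Maj q t}
  have hne : U.Nonempty :=
    ⟨_, isDecProb_single_zero n, maj_single_zero hp, maj_single_zero hq⟩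
  obtain ⟨s, hs, hsU, hglb⟩ := exists_maj_glb hne fun t ht => ht.1
  exact ⟨s, hs, hglb p hp fun t ht => ht.2.1, hglb q hq fun t ht => ht.2.2,
    fun t ht hpt hqt => hsU t ⟨ht, hpt, hqt⟩⟩
end

section
/- The function d(p,q) = H(p) + H(q) − 2H(p ∨ q) is nonnegative on δ_N × δ_N, and d(p,q) = 0 if and only if p = q. -/
open Finset

/-!
Since `p ≺ p ∨ q` and `q ≺ p ∨ q`, the distance is the sum of the two entropy drops
`H p - H (p ∨ q)` and `H q - H (p ∨ q)`, so everything rests on strict Schur concavity of `H`.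
For sorted `p ≺ q`, expanding `-x log x` to first order at each `p i` gives
`H q = H p - ∑ (q i - p i) (log (p i) + 1) - ∑ p i * klFun (q i / p i)`.
The middle sum is nonnegative by Abel summation: `log (p i)` decreases on the support of `p`
and the partial sums of `q - p` are nonnegative. The last sum is the Kullback–Leibler divergence
of `q` from `p`, which vanishes only if `q = p`. Majorization forces `q` to vanish wherever `p`
does, so restricting to the support of `p` loses nothing.
-/

open Real InformationTheory

theorem sum_range_mul_nonneg_of_antitoneOn {d w : ℕ → ℝ} {n : ℕ} (hw : AntitoneOn w (Set.Iio n))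
    (hd : ∀ l < n, 0 ≤ ∑ i ∈ range l, d i) (hsum : ∑ i ∈ range n, d i = 0) :
    0 ≤ ∑ i ∈ range n, d i * w i := by
  have abel := sum_range_by_parts w d n
  simp only [smul_eq_mul] at abel
  rw [sum_congr rfl fun i _ => mul_comm (d i) (w i), abel, hsum, mul_zero, zero_sub, neg_nonneg]
  refine sum_nonpos fun i hi => ?_
  have hi : i + 1 < n := by grind
  exact mul_nonpos_of_nonpos_of_nonneg
    (sub_nonpos.2 (hw (Set.mem_Iio.2 (by omega)) (Set.mem_Iio.2 hi) (Nat.le_succ i))) (hd _ hi)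

theorem negMulLog_eq_sub_sub_mul_klFun {p : ℝ} (hp : p ≠ 0) (q : ℝ) :
    negMulLog q = negMulLog p - (q - p) * (log p + 1) - p * klFun (q / p) := by
  by_cases hq : q = 0
  · rw [hq, zero_div, klFun_zero, negMulLog_zero, negMulLog]
    ring
  · rw [klFun_apply, log_div hq hp, negMulLog, negMulLog]
    field_simp
    ring

theorem mul_klFun_div_nonneg {a b : ℝ} (ha : 0 ≤ a) (hb : 0 ≤ b) : 0 ≤ a * klFun (b / a) :=
  mul_nonneg ha (klFun_nonneg (div_nonneg hb ha))

theorem sum_negMulLog_add_sum_mul_klFun_le {P Q : ℕ → ℝ} {n : ℕ} (hP : ∀ i < n, 0 < P i)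
    (hanti : AntitoneOn P (Set.Iio n)) (hmaj : ∀ l < n, ∑ i ∈ range l, P i ≤ ∑ i ∈ range l, Q i)
    (hsum : ∑ i ∈ range n, Q i = ∑ i ∈ range n, P i) :
    ∑ i ∈ range n, negMulLog (Q i) + ∑ i ∈ range n, P i * klFun (Q i / P i) ≤
      ∑ i ∈ range n, negMulLog (P i) := by
  have htangent : 0 ≤ ∑ i ∈ range n, (Q i - P i) * (log (P i) + 1) := by
    refine sum_range_mul_nonneg_of_antitoneOn ?_ (fun l hl => ?_) ?_
    · intro i hi j hj hij
      simp only [Set.mem_Iio] at hi hj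
      exact add_le_add_left (log_le_log (hP j hj) (hanti hi hj hij)) 1
    · simpa [sum_sub_distrib] using hmaj l hl
    · rw [sum_sub_distrib, hsum, sub_self]
  have hsplit : ∑ i ∈ range n, negMulLog (Q i) = ∑ i ∈ range n, negMulLog (P i)
      - ∑ i ∈ range n, (Q i - P i) * (log (P i) + 1) - ∑ i ∈ range n, P i * klFun (Q i / P i) := by
    rw [← sum_sub_distrib, ← sum_sub_distrib]
    exact sum_congr rfl fun i hi =>
      negMulLog_eq_sub_sub_mul_klFun (hP i (mem_range.1 hi)).ne' (Q i)
  linarith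

section ExtendByZero

variable {N : ℕ} {p q : Fin N → ℝ}

def extendByZero (p : Fin N → ℝ) (i : ℕ) : ℝ := if h : i < N then p ⟨i, h⟩ else 0

@[simp]
theorem extendByZero_coe (p : Fin N → ℝ) (i : Fin N) : extendByZero p i = p i := by
  simp [extendByZero]

theorem extendByZero_of_le (p : Fin N → ℝ) {i : ℕ} (hi : N ≤ i) : extendByZero p i = 0 := by
  simp [extendByZero, hi.not_gt]

theorem H_eq_sum_range_negMulLog (p : Fin N → ℝ) :
    H p = ∑ i ∈ range N, negMulLog (extendByZero p i) := by
  simp [← Fin.sum_univ_eq_sum_range, H, negMulLog]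

theorem sum_mul_klFun_eq_sum_range (p q : Fin N → ℝ) :
    ∑ i, p i * klFun (q i / p i) =
      ∑ i ∈ range N, extendByZero p i * klFun (extendByZero q i / extendByZero p i) := by
  simp [← Fin.sum_univ_eq_sum_range]

theorem partSum_eq_sum_range (p : Fin N → ℝ) (l : ℕ) :
    PartSum p l = ∑ i ∈ range l, extendByZero p i := by
  have h := Fin.sum_univ_eq_sum_range (fun i => if i < l then extendByZero p i else 0) N
  simp only [extendByZero_coe] at h
  rw [PartSum, h, ← sum_filter]
  refine sum_subset (fun i => by simp) fun i hil hiN => extendByZero_of_le p ?_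
  simp_all

theorem Maj.antisymm (hpq : Maj p q) (hqp : Maj q p) : p = q := by
  have h : ∀ l, PartSum p l = PartSum q l := fun l => (hpq l).antisymm (hqp l)
  funext i
  have := h (i + 1)
  rw [partSum_eq_sum_range, partSum_eq_sum_range, sum_range_succ, sum_range_succ,
    ← partSum_eq_sum_range, ← partSum_eq_sum_range, h i, extendByZero_coe, extendByZero_coe] at this
  exact add_left_cancel this

theorem IsDecProb.extendByZero_nonneg (hp : IsDecProb p) (i : ℕ) : 0 ≤ extendByZero p i := by
  unfold extendByZero
  split
  exacts [hp.1 _, le_rfl]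

theorem IsDecProb.antitone_extendByZero (hp : IsDecProb p) : Antitone (extendByZero p) := by
  intro i j hij
  by_cases hj : j < N
  · simpa [extendByZero, hj, hij.trans_lt hj] using hp.2.1 ⟨i, hij.trans_lt hj⟩ ⟨j, hj⟩ hij
  · simpa [extendByZero, hj] using hp.extendByZero_nonneg i

theorem IsDecProb.exists_pos_iff_lt (hp : IsDecProb p) :
    ∃ k ≤ N, ∀ i, 0 < extendByZero p i ↔ i < k := by
  classical
  have hzero : ∃ k, extendByZero p k = 0 := ⟨N, extendByZero_of_le p le_rfl⟩
  refine ⟨Nat.find hzero, Nat.find_min' hzero (extendByZero_of_le p le_rfl), fun i => ⟨?_, ?_⟩⟩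
  · intro hpos
    by_contra! hi
    linarith [hp.antitone_extendByZero hi, Nat.find_spec hzero]
  · exact fun hi => (hp.extendByZero_nonneg i).lt_of_ne' (Nat.find_min hzero hi)

theorem IsDecProb.partSum_le_one (hp : IsDecProb p) (l : ℕ) : PartSum p l ≤ 1 :=
  hp.2.2 ▸ sum_le_sum fun i _ => by split_ifs <;> simp [hp.1 i]

theorem IsDecProb.partSum_eq_one (hp : IsDecProb p) {j : ℕ} (hj : extendByZero p j = 0) :
    PartSum p j = 1 := by
  refine hp.2.2 ▸ sum_congr rfl fun i _ => ite_eq_left_iff.2 fun hi => ?_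
  have := hp.antitone_extendByZero (not_lt.1 hi)
  rw [hj, extendByZero_coe] at this
  exact (this.antisymm (hp.1 i)).symm

theorem Maj.extendByZero_eq_zero (hp : IsDecProb p) (hq : IsDecProb q) (hpq : Maj p q) {j : ℕ}
    (hj : extendByZero p j = 0) : extendByZero q j = 0 := by
  have h1 : 1 ≤ PartSum q j := hp.partSum_eq_one hj ▸ hpq j
  have h2 := hq.partSum_le_one (j + 1)
  rw [partSum_eq_sum_range, sum_range_succ, ← partSum_eq_sum_range] at h2
  linarith [hq.extendByZero_nonneg j]

theorem Maj.H_add_sum_mul_klFun_le (hp : IsDecProb p) (hq : IsDecProb q) (hpq : Maj p q) :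
    H q + ∑ i, p i * klFun (q i / p i) ≤ H p := by
  obtain ⟨k, hkN, hpos⟩ := hp.exists_pos_iff_lt
  have hp0 : ∀ i, k ≤ i → extendByZero p i = 0 := fun i hi =>
    ((hp.extendByZero_nonneg i).lt_or_eq.resolve_left (by simpa [hpos] using hi)).symm
  have hsub := range_subset_range.2 hkN
  rw [H_eq_sum_range_negMulLog, H_eq_sum_range_negMulLog, sum_mul_klFun_eq_sum_range,
    ← sum_subset hsub fun i _ hi => by
      simp [hpq.extendByZero_eq_zero hp hq (hp0 i (by simpa using hi))],
    ← sum_subset hsub fun i _ hi => by simp [hp0 i (by simpa using hi)],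
    ← sum_subset hsub fun i _ hi => by simp [hp0 i (by simpa using hi)]]
  have hk : PartSum p k = 1 := hp.partSum_eq_one (hp0 k le_rfl)
  refine sum_negMulLog_add_sum_mul_klFun_le (fun i hi => (hpos i).2 hi)
    (hp.antitone_extendByZero.antitoneOn _)
    (fun l _ => by simpa only [partSum_eq_sum_range] using hpq l) ?_
  rw [← partSum_eq_sum_range, ← partSum_eq_sum_range, hk]
  exact le_antisymm (hq.partSum_le_one k) (hk ▸ hpq k)

theorem Maj.H_le (hp : IsDecProb p) (hq : IsDecProb q) (hpq : Maj p q) : H q ≤ H p := by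
  have := hpq.H_add_sum_mul_klFun_le hp hq
  linarith [sum_nonneg fun i (_ : i ∈ univ) => mul_klFun_div_nonneg (hp.1 i) (hq.1 i)]

theorem Maj.eq_of_H_eq (hp : IsDecProb p) (hq : IsDecProb q) (hpq : Maj p q) (h : H p = H q) :
    p = q := by
  have hnonneg : ∀ i ∈ univ, 0 ≤ p i * klFun (q i / p i) := fun i _ =>
    mul_klFun_div_nonneg (hp.1 i) (hq.1 i)
  have hKL := hpq.H_add_sum_mul_klFun_le hp hq
  have hterm := (sum_eq_zero_iff_of_nonneg hnonneg).1
    (le_antisymm (by linarith) (sum_nonneg hnonneg))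
  funext i
  rcases (hp.1 i).eq_or_lt with hpi | hpi
  · have := hpq.extendByZero_eq_zero hp hq (j := i) (by simp [← hpi])
    rw [extendByZero_coe] at this
    rw [← hpi, this]
  · have hkl := (mul_eq_zero.1 (hterm i (mem_univ i))).resolve_left hpi.ne'
    rw [klFun_eq_zero_iff (div_nonneg (hq.1 i) hpi.le), div_eq_one_iff_eq hpi.ne'] at hkl
    exact hkl.symm

end ExtendByZero

/-- d(p,q) = H(p) + H(q) − 2H(p ∨ q) is nonnegative, and vanishes iff p = q. -/
theorem dist_nonneg_eq_zero_iff {N : ℕ} (p q s : Fin N → ℝ)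
    (hp : IsDecProb p) (hq : IsDecProb q) (hs : IsSup s p q) :
    0 ≤ H p + H q - 2 * H s ∧ (H p + H q - 2 * H s = 0 ↔ p = q) := by
  obtain ⟨hs, hps, hqs, hlub⟩ := hs
  have hsp := hps.H_le hp hs
  have hsq := hqs.H_le hq hs
  refine ⟨by linarith, fun hzero => ?_, ?_⟩
  · rw [hps.eq_of_H_eq hp hs (by linarith), hqs.eq_of_H_eq hq hs (by linarith)]
  · rintro rfl
    rw [hps.antisymm (hlub p hp (fun _ => le_rfl) fun _ => le_rfl)]
    ring
end
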